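/- Let G be a simple graph on n vertices with maximum degree at most d, let 0 < δ ≤ 1/4, and let Π be the orthogonal projection onto the span of the eigenvectors of the lazy random walk matrix M with eigenvalue greater than 1 − 4δ. Then for all vertices u, v, all reals α, β, and all integers t ≥ 0: ‖αq_u^t + βq_v^t‖ ≥ (1 − 4δ)^t·‖αΠq_u⁰ + βΠq_v⁰‖. Consequently, for every ε > 0, if Πq_u⁰ and Πq_v⁰ are ε-far from antipodal then q_u^t and q_v^t are (1 − 4δ)^t·ε-far from antipodal, and if Πq_u⁰ and Πq_v⁰ are ε-far from podal then q_u^t and q_v^t are (1 − 4δ)^t·ε-far from podal. -/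

import Mathlib

open scoped RealInnerProductSpace

open scoped Classical in
/-- The lazy random walk matrix of a graph `G` with degree parameter `d`. -/
noncomputable def lazyWalk {n : ℕ} (G : SimpleGraph (Fin n)) (d : ℕ) :
    Matrix (Fin n) (Fin n) ℝ :=
  Matrix.of fun u v =>
    if u = v then 1 - ((G.neighborSet u).ncard : ℝ) / (2 * d)
    else if G.Adj u v then 1 / (2 * d) else 0

/-- `G` has maximum degree at most `d`. -/
def MaxDegreeLE {n : ℕ} (G : SimpleGraph (Fin n)) (d : ℕ) : Prop :=
  ∀ v, (G.neighborSet v).ncard ≤ d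

/-- `p_u^t`: the endpoint distribution of a length-`t` lazy random walk from `u`. -/
noncomputable def pvec {n : ℕ} (G : SimpleGraph (Fin n)) (d t : ℕ) (u : Fin n) :
    EuclideanSpace ℝ (Fin n) :=
  WithLp.toLp 2 fun v => ((lazyWalk G d ^ t).mulVec fun w => if w = u then 1 else 0) v

/-- `q_u^t = p_u^t - (1/n) 𝟙`. -/
noncomputable def qvec {n : ℕ} (G : SimpleGraph (Fin n)) (d t : ℕ) (u : Fin n) :
    EuclideanSpace ℝ (Fin n) :=
  WithLp.toLp 2 fun v => pvec G d t u v - 1 / n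

/-- `q_u^0 = 1_u - (1/n) 𝟙`. -/
noncomputable def qzero {n : ℕ} (u : Fin n) : EuclideanSpace ℝ (Fin n) :=
  WithLp.toLp 2 fun v => (if v = u then 1 else 0) - 1 / n

/-- average of `q_u^0` over `u ∈ S`. -/
noncomputable def qavg {n : ℕ} (S : Finset (Fin n)) : EuclideanSpace ℝ (Fin n) :=
  (S.card : ℝ)⁻¹ • ∑ u ∈ S, qzero u

/-- `a` and `b` are `ε`-close to collinear. -/
def CloseCollinear {E : Type*} [NormedAddCommGroup E] [NormedSpace ℝ E]
    (ε : ℝ) (a b : E) : Prop :=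
  ∃ (ea eb w : E) (s s' : ℝ),
    ‖ea‖ ≤ ε ∧ ‖eb‖ ≤ ε ∧ a + ea = s • w ∧ b + eb = s' • w

/-- `a` and `b` are `ε`-close to antipodal. -/
def CloseAntipodal {E : Type*} [NormedAddCommGroup E] [NormedSpace ℝ E]
    (ε : ℝ) (a b : E) : Prop :=
  ∃ (ea eb w : E) (s s' : ℝ), 0 ≤ s ∧ 0 ≤ s' ∧
    ‖ea‖ ≤ ε ∧ ‖eb‖ ≤ ε ∧ a + ea = s • w ∧ b + eb = -(s' • w)

/-- `a` and `b` are `ε`-close to podal. -/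
def ClosePodal {E : Type*} [NormedAddCommGroup E] [NormedSpace ℝ E]
    (ε : ℝ) (a b : E) : Prop :=
  ∃ (ea eb w : E) (s s' : ℝ), 0 ≤ s ∧ 0 ≤ s' ∧
    ‖ea‖ ≤ ε ∧ ‖eb‖ ≤ ε ∧ a + ea = s • w ∧ b + eb = s' • w

/-- The Gram matrix `A_{u,v}` of two vectors. -/
noncomputable def gram2 {n : ℕ} (a b : EuclideanSpace ℝ (Fin n)) :
    Matrix (Fin 2) (Fin 2) ℝ :=
  !![‖a‖ ^ 2, ⟪a, b⟫; ⟪b, a⟫, ‖b‖ ^ 2]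

/-- Number of edges of `G` between `S` and `C \ S` (for `S ⊆ C`). -/
noncomputable def cutEdgesIn {n : ℕ} (G : SimpleGraph (Fin n)) (C S : Finset (Fin n)) : ℕ :=
  {p : Fin n × Fin n | p.1 ∈ S ∧ p.2 ∈ C ∧ p.2 ∉ S ∧ G.Adj p.1 p.2}.ncard

/-- Number of edges of `G` between `S` and its complement. -/
noncomputable def cutEdges {n : ℕ} (G : SimpleGraph (Fin n)) (S : Finset (Fin n)) : ℕ :=
  cutEdgesIn G Finset.univ S

/-- The cut conductance `φ_G(S) = e(S, V∖S) / (d|S|)`. -/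
noncomputable def cutCond {n : ℕ} (G : SimpleGraph (Fin n)) (d : ℕ) (S : Finset (Fin n)) : ℝ :=
  (cutEdges G S : ℝ) / (d * S.card)

/-- The (inner) conductance of the induced subgraph `G[C]` is at least `φ`. -/
def InnerConductanceGE {n : ℕ} (G : SimpleGraph (Fin n)) (d : ℕ) (C : Finset (Fin n))
    (φ : ℝ) : Prop :=
  ∀ S ⊆ C, S.Nonempty → 2 * S.card ≤ C.card →
    φ ≤ (cutEdgesIn G C S : ℝ) / (d * S.card)

/-- `G` is `(2, φ)`-clusterable. -/
def Clusterable2 {n : ℕ} (G : SimpleGraph (Fin n)) (d : ℕ) (φ : ℝ) : Prop :=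
  InnerConductanceGE G d Finset.univ φ ∨
  ∃ C₁ C₂ : Finset (Fin n), C₁.Nonempty ∧ C₂.Nonempty ∧ Disjoint C₁ C₂ ∧
    C₁ ∪ C₂ = Finset.univ ∧ InnerConductanceGE G d C₁ φ ∧ InnerConductanceGE G d C₂ φ

/-- `G` is `ε`-far from `(2, φ)`-clusterable. -/
def FarFromClusterable2 {n : ℕ} (G : SimpleGraph (Fin n)) (d : ℕ) (ε φ : ℝ) : Prop :=
  ∀ G' : SimpleGraph (Fin n), MaxDegreeLE G' d →
    ((symmDiff G.edgeSet G'.edgeSet).ncard : ℝ) ≤ ε * d * n →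
    ¬ Clusterable2 G' d φ

/-- The span of the eigenvectors of `M` with eigenvalue greater than `c`. -/
noncomputable def heavySpace {n : ℕ} (M : Matrix (Fin n) (Fin n) ℝ) (c : ℝ) :
    Submodule ℝ (EuclideanSpace ℝ (Fin n)) :=
  ⨆ μ : {μ : ℝ // c < μ}, Module.End.eigenspace (Matrix.toEuclideanLin M) (μ : ℝ)

/-- Orthogonal projection onto the span of the eigenvectors of `M` with eigenvalue
greater than `c`. -/
noncomputable def heavyProj {n : ℕ} (M : Matrix (Fin n) (Fin n) ℝ) (c : ℝ)
    (x : EuclideanSpace ℝ (Fin n)) : EuclideanSpace ℝ (Fin n) :=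
  (Submodule.orthogonalProjection (heavySpace M c) x : EuclideanSpace ℝ (Fin n))


/-!
In an orthonormal eigenbasis of the symmetric matrix `M`, the coordinates of `Π x` are those of
`x` along eigenvectors with eigenvalue `μ > 1 - 4δ ≥ 0`, and `M ^ t` multiplies each coordinate by
`μ ^ t`; hence `(1 - 4δ) ^ t ‖Π x‖ ≤ ‖M ^ t x‖`. As `M` fixes `𝟙`, `q_u^t = M ^ t q_u^0`, and the
first claim is this inequality for `x = α q_u^0 + β q_v^0`. For the second, `a` and `b` are
`ε`-close to antipodal iff the segment `[a, b]` meets the closed `ε`-ball, segments are mapped to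
segments by linear maps, and `a, b` are `ε`-close to podal iff `a, -b` are `ε`-close to antipodal.
-/

theorem OrthonormalBasis.norm_le_norm_of_forall_norm_inner_le {ι 𝕜 E : Type*} [Fintype ι]
    [RCLike 𝕜] [NormedAddCommGroup E] [InnerProductSpace 𝕜 E] (b : OrthonormalBasis ι 𝕜 E)
    {x y : E} (h : ∀ i, ‖inner 𝕜 (b i) x‖ ≤ ‖inner 𝕜 (b i) y‖) : ‖x‖ ≤ ‖y‖ := by
  rw [← sq_le_sq₀ (norm_nonneg x) (norm_nonneg y), ← b.sum_sq_norm_inner_right,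
    ← b.sum_sq_norm_inner_right]
  gcongr with i
  exact h i

section HeavyEigenspace

open Module.End

variable {E : Type*} [NormedAddCommGroup E] [InnerProductSpace ℝ E]

def heavyEigenspace (T : Module.End ℝ E) (c : ℝ) : Submodule ℝ E :=
  ⨆ μ : {μ : ℝ // c < μ}, eigenspace T μ

theorem eigenspace_le_heavyEigenspace {T : Module.End ℝ E} {c μ : ℝ} (h : c < μ) :
    eigenspace T μ ≤ heavyEigenspace T c :=
  le_iSup (fun ν : {ν : ℝ // c < ν} => eigenspace T ν) ⟨μ, h⟩

namespace LinearMap.IsSymmetric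

variable {T : Module.End ℝ E} (hT : T.IsSymmetric) {c : ℝ}
include hT

theorem eigenspace_le_orthogonal_heavyEigenspace {μ : ℝ} (h : μ ≤ c) :
    eigenspace T μ ≤ (heavyEigenspace T c)ᗮ :=
  Submodule.isOrtho_iSup_right.mpr fun ν =>
    hT.orthogonalFamily_eigenspaces.isOrtho (h.trans_lt ν.2).ne

variable [FiniteDimensional ℝ E]

theorem starProjection_heavyEigenspace_eigenvectorBasis (i : Fin (Module.finrank ℝ E)) :
    (heavyEigenspace T c).starProjection (hT.eigenvectorBasis rfl i) =
      if c < hT.eigenvalues rfl i then hT.eigenvectorBasis rfl i else 0 := by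
  have hmem := (hT.hasEigenvector_eigenvectorBasis rfl i).1
  split_ifs with h
  · exact Submodule.starProjection_eq_self_iff.mpr (eigenspace_le_heavyEigenspace h hmem)
  · exact (Submodule.starProjection_apply_eq_zero_iff _).mpr
      (hT.eigenspace_le_orthogonal_heavyEigenspace (not_lt.mp h) hmem)

theorem inner_eigenvectorBasis_starProjection_heavyEigenspace (i : Fin (Module.finrank ℝ E))
    (x : E) :
    ⟪hT.eigenvectorBasis rfl i, (heavyEigenspace T c).starProjection x⟫ =
      if c < hT.eigenvalues rfl i then ⟪hT.eigenvectorBasis rfl i, x⟫ else 0 := by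
  rw [← Submodule.inner_starProjection_left_eq_right,
    hT.starProjection_heavyEigenspace_eigenvectorBasis]
  split_ifs <;> simp

theorem inner_eigenvectorBasis_pow_apply (i : Fin (Module.finrank ℝ E)) (t : ℕ) (x : E) :
    ⟪hT.eigenvectorBasis rfl i, (T ^ t) x⟫ =
      hT.eigenvalues rfl i ^ t * ⟪hT.eigenvectorBasis rfl i, x⟫ := by
  rw [← hT.pow t, (hT.hasEigenvector_eigenvectorBasis rfl i).pow_apply, real_inner_smul_left,
    RCLike.ofReal_real_eq_id, id_eq]

theorem pow_mul_norm_starProjection_heavyEigenspace_le (hc : 0 ≤ c) (t : ℕ) (x : E) :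
    c ^ t * ‖(heavyEigenspace T c).starProjection x‖ ≤ ‖(T ^ t) x‖ := by
  rw [← norm_smul_of_nonneg (pow_nonneg hc t)]
  refine (hT.eigenvectorBasis rfl).norm_le_norm_of_forall_norm_inner_le fun i => ?_
  rw [inner_smul_right, hT.inner_eigenvectorBasis_starProjection_heavyEigenspace,
    hT.inner_eigenvectorBasis_pow_apply]
  split_ifs with h
  · rw [norm_mul, norm_mul]
    gcongr
    simp only [norm_pow, Real.norm_eq_abs]
    gcongr
  · simp only [norm_zero, mul_zero]
    positivity

theorem starProjection_heavyEigenspace_eq_zero_of_pow_apply_eq_zero (hc : 0 ≤ c) {t : ℕ}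
    {x : E} (hx : (T ^ t) x = 0) : (heavyEigenspace T c).starProjection x = 0 := by
  rw [← (hT.eigenvectorBasis rfl).sum_repr' ((heavyEigenspace T c).starProjection x)]
  refine Finset.sum_eq_zero fun i _ => ?_
  rw [hT.inner_eigenvectorBasis_starProjection_heavyEigenspace]
  split_ifs with h
  · have hμx := hT.inner_eigenvectorBasis_pow_apply i t x
    rw [hx, inner_zero_right, eq_comm, mul_eq_zero] at hμx
    rw [hμx.resolve_left (pow_ne_zero t (hc.trans_lt h).ne'), zero_smul]
  · exact zero_smul ℝ _

theorem norm_starProjection_heavyEigenspace_le_of_norm_pow_apply_le (hc : 0 ≤ c) {t : ℕ}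
    {x : E} {ε : ℝ} (hε : 0 ≤ ε) (h : ‖(T ^ t) x‖ ≤ c ^ t * ε) :
    ‖(heavyEigenspace T c).starProjection x‖ ≤ ε := by
  rcases (pow_nonneg hc t).eq_or_lt with h0 | hpos
  · rw [← h0, zero_mul, norm_le_zero_iff] at h
    rw [hT.starProjection_heavyEigenspace_eq_zero_of_pow_apply_eq_zero hc h, norm_zero]
    exact hε
  · exact le_of_mul_le_mul_left
      ((hT.pow_mul_norm_starProjection_heavyEigenspace_le hc t x).trans h) hpos

end LinearMap.IsSymmetric

end HeavyEigenspace

section Antipodal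

variable {E F F' : Type*} [NormedAddCommGroup E] [NormedSpace ℝ E]
  [NormedAddCommGroup F] [NormedSpace ℝ F] [NormedAddCommGroup F'] [NormedSpace ℝ F']

theorem closeAntipodal_iff_exists_mem_segment {ε : ℝ} {a b : E} :
    CloseAntipodal ε a b ↔ ∃ z ∈ segment ℝ a b, ‖z‖ ≤ ε := by
  constructor
  · rintro ⟨ea, eb, w, s, s', hs, hs', hea, heb, ha, hb⟩
    have hcomb : s' • a + s • b = -(s' • ea + s • eb) := by
      rw [eq_sub_of_add_eq ha, eq_sub_of_add_eq hb]; module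
    have hnorm : ‖s' • a + s • b‖ ≤ (s' + s) * ε := by
      rw [hcomb, norm_neg]
      calc ‖s' • ea + s • eb‖ ≤ s' * ‖ea‖ + s * ‖eb‖ := by
            refine (norm_add_le _ _).trans_eq ?_
            rw [norm_smul_of_nonneg hs', norm_smul_of_nonneg hs]
        _ ≤ (s' + s) * ε := by rw [add_mul]; gcongr
    rcases (add_nonneg hs' hs).eq_or_lt with hsum | hsum
    · refine ⟨a, left_mem_segment ℝ a b, ?_⟩
      have hs0 : s = 0 := by linarith
      rw [eq_sub_of_add_eq ha, hs0, zero_smul, zero_sub, norm_neg]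
      exact hea
    · refine ⟨(s' + s)⁻¹ • (s' • a + s • b), ?_, ?_⟩
      · refine ⟨s' / (s' + s), s / (s' + s), by positivity, by positivity, by field_simp, ?_⟩
        simp only [smul_add, smul_smul, div_eq_inv_mul]
      · rw [norm_smul_of_nonneg (by positivity), inv_mul_le_iff₀ hsum]
        exact hnorm
  · rintro ⟨z, ⟨p, q, hp, hq, hpq, rfl⟩, hz⟩
    refine ⟨-(p • a + q • b), -(p • a + q • b), a - b, q, p, hq, hp,
      by rwa [norm_neg], by rwa [norm_neg], ?_, ?_⟩
    · obtain rfl := eq_sub_of_add_eq' hpq; module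
    · obtain rfl := eq_sub_of_add_eq' hpq; module

theorem closePodal_iff_closeAntipodal_neg {ε : ℝ} {a b : E} :
    ClosePodal ε a b ↔ CloseAntipodal ε a (-b) := by
  constructor
  · rintro ⟨ea, eb, w, s, s', hs, hs', hea, heb, ha, hb⟩
    exact ⟨ea, -eb, w, s, s', hs, hs', hea, by rwa [norm_neg], ha, by rw [← hb, neg_add]⟩
  · rintro ⟨ea, eb, w, s, s', hs, hs', hea, heb, ha, hb⟩
    exact ⟨ea, -eb, w, s, s', hs, hs', hea, by rwa [norm_neg], ha, by
      rw [← neg_neg (s' • w), ← hb, neg_add, neg_neg]⟩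

theorem CloseAntipodal.of_map {f : E →ₗ[ℝ] F} {g : E →ₗ[ℝ] F'} {k ε : ℝ} {a b : E}
    (hfg : ∀ y, ‖g y‖ ≤ k * ε → ‖f y‖ ≤ ε) (h : CloseAntipodal (k * ε) (g a) (g b)) :
    CloseAntipodal ε (f a) (f b) := by
  rw [closeAntipodal_iff_exists_mem_segment] at h ⊢
  obtain ⟨_, ⟨p, q, hp, hq, hpq, rfl⟩, hz⟩ := h
  refine ⟨f (p • a + q • b), ⟨p, q, hp, hq, hpq, by simp⟩, hfg _ ?_⟩
  simpa using hz

theorem ClosePodal.of_map {f : E →ₗ[ℝ] F} {g : E →ₗ[ℝ] F'} {k ε : ℝ} {a b : E}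
    (hfg : ∀ y, ‖g y‖ ≤ k * ε → ‖f y‖ ≤ ε) (h : ClosePodal (k * ε) (g a) (g b)) :
    ClosePodal ε (f a) (f b) := by
  rw [closePodal_iff_closeAntipodal_neg, ← map_neg] at h ⊢
  exact h.of_map hfg

end Antipodal

section LazyWalk

open Matrix

variable {n : ℕ} (G : SimpleGraph (Fin n)) (d : ℕ)

theorem lazyWalk_eq_one_sub_smul_lapMatrix [DecidableRel G.Adj] :
    lazyWalk G d = 1 - (2 * d : ℝ)⁻¹ • G.lapMatrix ℝ := by
  ext u v
  have hdeg : ((G.neighborSet u).ncard : ℝ) = G.degree u := by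
    rw [← Nat.card_coe_set_eq, Nat.card_eq_fintype_card, SimpleGraph.card_neighborSet_eq_degree]
  by_cases huv : u = v
  · subst huv
    simp [lazyWalk, SimpleGraph.lapMatrix, SimpleGraph.degMatrix, hdeg, div_eq_inv_mul]
  · by_cases hadj : G.Adj u v <;>
      simp [lazyWalk, SimpleGraph.lapMatrix, SimpleGraph.degMatrix, huv, hadj]

theorem lazyWalk_isHermitian : (lazyWalk G d).IsHermitian := by
  classical
  rw [lazyWalk_eq_one_sub_smul_lapMatrix]
  exact isHermitian_one.sub ((G.isHermitian_lapMatrix ℝ).smul (IsSelfAdjoint.all _))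

theorem lazyWalk_mulVec_one : lazyWalk G d *ᵥ (fun _ => 1) = fun _ => 1 := by
  classical
  rw [lazyWalk_eq_one_sub_smul_lapMatrix, sub_mulVec, smul_mulVec,
    G.lapMatrix_mulVec_const_eq_zero, one_mulVec, smul_zero, sub_zero]

theorem lazyWalk_pow_mulVec_one (t : ℕ) : lazyWalk G d ^ t *ᵥ (fun _ => 1) = fun _ => 1 := by
  induction t with
  | zero => exact one_mulVec _
  | succ t ih => rw [pow_succ, ← mulVec_mulVec, lazyWalk_mulVec_one, ih]

theorem qvec_eq_pow_apply_qzero (t : ℕ) (u : Fin n) :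
    qvec G d t u = (toEuclideanLin (lazyWalk G d) ^ t) (qzero u) := by
  have hq : (fun v => (if v = u then 1 else 0) - 1 / n : Fin n → ℝ)
      = (fun v => if v = u then 1 else 0) - (1 / n : ℝ) • fun _ => 1 := by
    ext v; simp
  rw [← toLpLin_pow, qzero, toLpLin_toLp, hq, toLin'_apply, mulVec_sub, mulVec_smul,
    lazyWalk_pow_mulVec_one]
  ext v
  simp [qvec, pvec]

end LazyWalk

theorem heavyProj_eq_starProjection {n : ℕ} (M : Matrix (Fin n) (Fin n) ℝ) (c : ℝ)
    (x : EuclideanSpace ℝ (Fin n)) :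
    heavyProj M c x = (heavyEigenspace (Matrix.toEuclideanLin M) c).starProjection x :=
  rfl

theorem stmt18_general {n d : ℕ} (G : SimpleGraph (Fin n))
    (δ : ℝ) (hδ1 : δ ≤ 1 / 4) :
    ∀ (u v : Fin n) (α β : ℝ) (t : ℕ),
      ((1 - 4 * δ) ^ t *
        ‖α • heavyProj (lazyWalk G d) (1 - 4 * δ) (qzero u) +
          β • heavyProj (lazyWalk G d) (1 - 4 * δ) (qzero v)‖ ≤
        ‖α • qvec G d t u + β • qvec G d t v‖) ∧
      ∀ ε : ℝ, 0 < ε →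
        (¬ CloseAntipodal ε (heavyProj (lazyWalk G d) (1 - 4 * δ) (qzero u))
            (heavyProj (lazyWalk G d) (1 - 4 * δ) (qzero v)) →
          ¬ CloseAntipodal ((1 - 4 * δ) ^ t * ε) (qvec G d t u) (qvec G d t v)) ∧
        (¬ ClosePodal ε (heavyProj (lazyWalk G d) (1 - 4 * δ) (qzero u))
            (heavyProj (lazyWalk G d) (1 - 4 * δ) (qzero v)) →
          ¬ ClosePodal ((1 - 4 * δ) ^ t * ε) (qvec G d t u) (qvec G d t v)) := by
  intro u v α β t
  have hc : 0 ≤ 1 - 4 * δ := by linarith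
  have hT : (Matrix.toEuclideanLin (lazyWalk G d)).IsSymmetric :=
    Matrix.isSymmetric_toEuclideanLin_iff.mpr (lazyWalk_isHermitian G d)
  simp only [heavyProj_eq_starProjection, qvec_eq_pow_apply_qzero]
  have hPT (ε : ℝ) (hε : 0 < ε) (y : EuclideanSpace ℝ (Fin n)) :=
    hT.norm_starProjection_heavyEigenspace_le_of_norm_pow_apply_le hc (t := t) (x := y) hε.le
  refine ⟨?_, fun ε hε => ⟨fun hfar h => hfar (h.of_map (hPT ε hε)),
    fun hfar h => hfar (h.of_map (hPT ε hε))⟩⟩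
  simpa only [map_add, map_smul] using
    hT.pow_mul_norm_starProjection_heavyEigenspace_le hc t (α • qzero u + β • qzero v)

theorem stmt18 {n d : ℕ} (hd : 1 ≤ d) (G : SimpleGraph (Fin n)) (hdeg : MaxDegreeLE G d)
    (δ : ℝ) (hδ0 : 0 < δ) (hδ1 : δ ≤ 1 / 4) :
    ∀ (u v : Fin n) (α β : ℝ) (t : ℕ),
      ((1 - 4 * δ) ^ t *
        ‖α • heavyProj (lazyWalk G d) (1 - 4 * δ) (qzero u) +
          β • heavyProj (lazyWalk G d) (1 - 4 * δ) (qzero v)‖ ≤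
        ‖α • qvec G d t u + β • qvec G d t v‖) ∧
      ∀ ε : ℝ, 0 < ε →
        (¬ CloseAntipodal ε (heavyProj (lazyWalk G d) (1 - 4 * δ) (qzero u))
            (heavyProj (lazyWalk G d) (1 - 4 * δ) (qzero v)) →
          ¬ CloseAntipodal ((1 - 4 * δ) ^ t * ε) (qvec G d t u) (qvec G d t v)) ∧
        (¬ ClosePodal ε (heavyProj (lazyWalk G d) (1 - 4 * δ) (qzero u))
            (heavyProj (lazyWalk G d) (1 - 4 * δ) (qzero v)) →
          ¬ ClosePodal ((1 - 4 * δ) ^ t * ε) (qvec G d t u) (qvec G d t v)) :=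
  stmt18_general G δ hδ1
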